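/- arXiv:2412.12049 — 2 statements merged into one kernel-verified Lean document; each statement's English description precedes it below -/
import Mathlib

section
/- Let f : R^d → R be L-smooth and bounded below by f*, and suppose random vectors z_t satisfy the biased ABC conditions ⟨∇f(θ^t), E[z_t | θ^t]⟩ ≥ b‖∇f(θ^t)‖² - c and E[‖z_t‖² | θ^t] ≤ 2A(f(θ^t) - f*) + B‖∇f(θ^t)‖² + C with b > 0. Then for the iteration θ^{t+1} = θ^t - α z_t with 0 < α ≤ b/(LB), min_{0 ≤ t ≤ T-1} E[‖∇f(θ^t)‖²] ≤ (2(1 + ALα²)^T / (b α T))(f(θ^0) - f*) + (LαC)/b + 2c/b. -/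
/-!
The `L`-smoothness of `f` gives the descent inequality
`f (θ - α z) ≤ f θ - α ⟪∇f θ, z⟫ + L α² ‖z‖² / 2`. Taking expectations, pulling the
`ℱ t`-measurable gradient out of the conditional expectation and inserting the two ABC conditions
(with `α L B ≤ b` absorbing the `B`-term) yields, for the gaps `δ t = E f(θ t) - f*`,
`δ (t+1) ≤ (1 + A L α²) δ t - (α b / 2) E‖∇f(θ t)‖² + α c + L α² C / 2`.
If the minimum `m` of the expected squared gradient norms beat the bound, every step would decrease
`δ` by the fixed amount `u = (α b / 2) m - (α c + L α² C / 2) > 0` up to the factor `1 + A L α²`,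
so `0 ≤ δ T ≤ (1 + A L α²)^T δ 0 - T u`, which is the claimed bound on `m`.
-/

open MeasureTheory RealInnerProductSpace

section Descent

variable {E : Type*} [NormedAddCommGroup E] [InnerProductSpace ℝ E] [CompleteSpace E]
  {f : E → ℝ}

theorem Differentiable.hasDerivAt_comp_add_smul (hf : Differentiable ℝ f) (x v : E) (s : ℝ) :
    HasDerivAt (fun s : ℝ => f (x + s • v)) ⟪gradient f (x + s • v), v⟫ s := by
  have hline : HasDerivAt (fun s : ℝ => x + s • v) v s := by
    simpa using ((hasDerivAt_id s).smul_const v).const_add x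
  simpa [InnerProductSpace.toDual_apply_apply, Function.comp_def] using
    (hf (x + s • v)).hasGradientAt.hasFDerivAt.comp_hasDerivAt s hline

theorem Differentiable.le_add_inner_gradient_add_sq {L : ℝ} (hf : Differentiable ℝ f)
    (hL : ∀ x y, ‖gradient f x - gradient f y‖ ≤ L * ‖x - y‖) (x y : E) :
    f y ≤ f x + ⟪gradient f x, y - x⟫ + L / 2 * ‖y - x‖ ^ 2 := by
  set v := y - x
  set φ : ℝ → ℝ := fun s => f (x + s • v) - s * ⟪gradient f x, v⟫ - L / 2 * s ^ 2 * ‖v‖ ^ 2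
  have hφ : ∀ s, HasDerivAt φ
      (⟪gradient f (x + s • v), v⟫ - ⟪gradient f x, v⟫ - L / 2 * (2 * s) * ‖v‖ ^ 2) s := by
    intro s
    refine (((hf.hasDerivAt_comp_add_smul x v s).sub
      ((hasDerivAt_id s).mul_const ⟪gradient f x, v⟫)).sub
      (((hasDerivAt_pow 2 s).const_mul (L / 2)).mul_const (‖v‖ ^ 2))).congr_deriv ?_
    norm_num
  have hanti : AntitoneOn φ (Set.Icc 0 1) := by
    refine antitoneOn_of_deriv_nonpos (convex_Icc 0 1)
      (fun s _ => (hφ s).continuousAt.continuousWithinAt)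
      (fun s _ => (hφ s).differentiableAt.differentiableWithinAt) fun s hs => ?_
    rw [interior_Icc] at hs
    have hgrad : ⟪gradient f (x + s • v) - gradient f x, v⟫ ≤ L * s * ‖v‖ ^ 2 :=
      calc ⟪gradient f (x + s • v) - gradient f x, v⟫
          ≤ ‖gradient f (x + s • v) - gradient f x‖ * ‖v‖ := real_inner_le_norm _ _
        _ ≤ L * ‖(x + s • v) - x‖ * ‖v‖ := by gcongr; exact hL _ _
        _ = L * s * ‖v‖ ^ 2 := by
          rw [add_sub_cancel_left, norm_smul, Real.norm_of_nonneg hs.1.le]; ring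
    rw [(hφ s).deriv, inner_sub_left] at *
    linarith
  have h01 := hanti (Set.left_mem_Icc.2 zero_le_one) (Set.right_mem_Icc.2 zero_le_one) zero_le_one
  have hxv : x + v = y := add_sub_cancel x y
  simp only [φ, hxv, zero_smul, add_zero, one_smul, zero_mul, sub_zero, one_mul, one_pow,
    mul_one, ne_eq, OfNat.ofNat_ne_zero, not_false_eq_true, zero_pow, mul_zero] at h01
  linarith

theorem Differentiable.apply_sub_smul_le {L : ℝ} (hf : Differentiable ℝ f)
    (hL : ∀ x y, ‖gradient f x - gradient f y‖ ≤ L * ‖x - y‖) (x v : E) (α : ℝ) :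
    f (x - α • v) ≤ f x - α * ⟪gradient f x, v⟫ + L / 2 * α ^ 2 * ‖v‖ ^ 2 := by
  have h := hf.le_add_inner_gradient_add_sq hL x (x - α • v)
  rwa [sub_sub_cancel_left, inner_neg_right, real_inner_smul_right, norm_neg, norm_smul,
    Real.norm_eq_abs, mul_pow, sq_abs, ← sub_eq_add_neg, ← mul_assoc] at h

end Descent

theorem le_pow_mul_sub_mul_of_forall_lt_succ_le {δ : ℕ → ℝ} {r u : ℝ} (hr : 1 ≤ r) (hu : 0 ≤ u)
    {T : ℕ} (h : ∀ t < T, δ (t + 1) ≤ r * δ t - u) : δ T ≤ r ^ T * δ 0 - T * u := by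
  induction T with
  | zero => simp
  | succ T ih =>
    have hT := ih fun t ht => h t (by omega)
    have hTu : (T : ℝ) * u ≤ r * (T * u) := le_mul_of_one_le_left (by positivity) hr
    calc δ (T + 1) ≤ r * δ T - u := h T T.lt_succ_self
      _ ≤ r * (r ^ T * δ 0 - T * u) - u := by gcongr
      _ ≤ r ^ (T + 1) * δ 0 - (T + 1 : ℕ) * u := by push_cast; rw [pow_succ]; linarith

theorem inf'_range_le_of_forall_succ_le {δ N : ℕ → ℝ} {r k e : ℝ} (hr : 1 ≤ r) (hk : 0 < k)
    (hδ : ∀ t, 0 ≤ δ t) (hstep : ∀ t, δ (t + 1) ≤ r * δ t - k * N t + e)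
    {T : ℕ} (hT : (Finset.range T).Nonempty) :
    (Finset.range T).inf' hT N ≤ r ^ T * δ 0 / (k * T) + e / k := by
  set m := (Finset.range T).inf' hT N
  have hTpos : (0 : ℝ) < T := by exact_mod_cast pos_of_ne_zero (Finset.nonempty_range_iff.mp hT)
  have hδ0 : 0 ≤ r ^ T * δ 0 / (k * T) := by have := hδ 0; positivity
  rcases le_or_gt (k * m - e) 0 with hme | hme
  · have : m ≤ e / k := by rw [le_div_iff₀ hk]; linarith
    linarith
  · have hdecr : ∀ t < T, δ (t + 1) ≤ r * δ t - (k * m - e) := fun t ht => by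
      have hmN : k * m ≤ k * N t :=
        mul_le_mul_of_nonneg_left (Finset.inf'_le _ (Finset.mem_range.mpr ht)) hk.le
      linarith [hstep t]
    have hsum : T * (k * m - e) ≤ r ^ T * δ 0 := by
      linarith [le_pow_mul_sub_mul_of_forall_lt_succ_le hr hme.le hdecr, hδ T]
    rw [div_add_div _ _ (by positivity) hk.ne', le_div_iff₀ (by positivity)]
    linarith [mul_le_mul_of_nonneg_left hsum hk.le]

section Probability

variable {Ω E : Type*} {m mΩ : MeasurableSpace Ω} {μ : Measure Ω}
  [NormedAddCommGroup E] [InnerProductSpace ℝ E]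

theorem MeasureTheory.MemLp.integrable_inner {g h : Ω → E} (hg : MemLp g 2 μ)
    (hh : MemLp h 2 μ) : Integrable (fun ω => ⟪g ω, h ω⟫) μ := by
  refine (L2.integrable_inner (𝕜 := ℝ) (hg.toLp g) (hh.toLp h)).congr ?_
  filter_upwards [hg.coeFn_toLp, hh.coeFn_toLp] with ω hgω hhω
  rw [hgω, hhω]

theorem MeasureTheory.integral_le_of_condExp_le (hm : m ≤ mΩ) [SigmaFinite (μ.trim hm)]
    {f g : Ω → ℝ} (hg : Integrable g μ) (h : μ[f | m] ≤ᵐ[μ] g) :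
    ∫ ω, f ω ∂μ ≤ ∫ ω, g ω ∂μ := by
  rw [← integral_condExp hm]
  exact integral_mono_ae integrable_condExp hg h

theorem MeasureTheory.le_integral_of_le_condExp (hm : m ≤ mΩ) [SigmaFinite (μ.trim hm)]
    {f g : Ω → ℝ} (hg : Integrable g μ) (h : g ≤ᵐ[μ] μ[f | m]) :
    ∫ ω, g ω ∂μ ≤ ∫ ω, f ω ∂μ := by
  rw [← integral_condExp hm (f := f)]
  exact integral_mono_ae hg integrable_condExp h

variable [CompleteSpace E] [IsProbabilityMeasure μ]

theorem le_integral_inner_of_le_inner_condExp (hm : m ≤ mΩ) {G z : Ω → E}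
    (hG : StronglyMeasurable[m] G) (hG2 : MemLp G 2 μ) (hz : MemLp z 2 μ) {b c : ℝ}
    (hcorr : ∀ᵐ ω ∂μ, b * ‖G ω‖ ^ 2 - c ≤ ⟪G ω, (μ[z | m]) ω⟫) :
    b * ∫ ω, ‖G ω‖ ^ 2 ∂μ - c ≤ ∫ ω, ⟪G ω, z ω⟫ ∂μ := by
  have hpull : μ[fun ω => ⟪G ω, z ω⟫ | m] =ᵐ[μ] fun ω => ⟪G ω, (μ[z | m]) ω⟫ :=
    condExp_bilin_of_stronglyMeasurable_left (innerSL ℝ) hG (hG2.integrable_inner hz)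
      (hz.integrable one_le_two)
  have hG2' : Integrable (fun ω => ‖G ω‖ ^ 2) μ :=
    (memLp_two_iff_integrable_sq_norm hG2.1).mp hG2
  calc b * ∫ ω, ‖G ω‖ ^ 2 ∂μ - c = ∫ ω, (b * ‖G ω‖ ^ 2 - c) ∂μ := by
        rw [integral_sub (hG2'.const_mul b) (integrable_const c), integral_const_mul,
          integral_const, probReal_univ, one_smul]
    _ ≤ ∫ ω, ⟪G ω, z ω⟫ ∂μ :=
        le_integral_of_le_condExp hm ((hG2'.const_mul b).sub (integrable_const c)) <| by
          filter_upwards [hcorr, hpull] with ω hω hpullω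
          exact hω.trans_eq hpullω.symm

theorem integral_sub_le_of_sgd_step (hm : m ≤ mΩ) {f : E → ℝ} {L fstar b c A B C α : ℝ}
    (hf : Differentiable ℝ f) (hL : ∀ x y, ‖gradient f x - gradient f y‖ ≤ L * ‖x - y‖)
    (hL0 : 0 ≤ L) (hα : 0 ≤ α) (hαLB : α * (L * B) ≤ b)
    {θ θ' z : Ω → E} (hθ' : ∀ ω, θ' ω = θ ω - α • z ω)
    (hG : StronglyMeasurable[m] fun ω => gradient f (θ ω)) (hz : MemLp z 2 μ)
    (hfθ : Integrable (fun ω => f (θ ω)) μ) (hfθ' : Integrable (fun ω => f (θ' ω)) μ)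
    (hGθ : Integrable (fun ω => ‖gradient f (θ ω)‖ ^ 2) μ)
    (hcorr : ∀ᵐ ω ∂μ, b * ‖gradient f (θ ω)‖ ^ 2 - c ≤ ⟪gradient f (θ ω), (μ[z | m]) ω⟫)
    (hsec : ∀ᵐ ω ∂μ, (μ[fun ω' => ‖z ω'‖ ^ 2 | m]) ω ≤
      2 * A * (f (θ ω) - fstar) + B * ‖gradient f (θ ω)‖ ^ 2 + C) :
    ∫ ω, f (θ' ω) ∂μ - fstar ≤ (1 + A * L * α ^ 2) * (∫ ω, f (θ ω) ∂μ - fstar)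
      - α * b / 2 * ∫ ω, ‖gradient f (θ ω)‖ ^ 2 ∂μ + (α * c + L * α ^ 2 * C / 2) := by
  set G := fun ω => gradient f (θ ω)
  have hG2 : MemLp G 2 μ :=
    (memLp_two_iff_integrable_sq_norm (hG.mono hm).aestronglyMeasurable).mpr hGθ
  have hzsq : Integrable (fun ω => ‖z ω‖ ^ 2) μ := (memLp_two_iff_integrable_sq_norm hz.1).mp hz
  have hGz : Integrable (fun ω => ⟪G ω, z ω⟫) μ := hG2.integrable_inner hz
  have hfirst := le_integral_inner_of_le_inner_condExp hm hG hG2 hz hcorr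
  have hsecond : ∫ ω, ‖z ω‖ ^ 2 ∂μ ≤
      2 * A * (∫ ω, f (θ ω) ∂μ - fstar) + B * ∫ ω, ‖G ω‖ ^ 2 ∂μ + C := by
    have hgap : Integrable (fun ω => 2 * A * (f (θ ω) - fstar)) μ :=
      (hfθ.sub (integrable_const fstar)).const_mul _
    have hint : Integrable (fun ω => 2 * A * (f (θ ω) - fstar) + B * ‖G ω‖ ^ 2) μ :=
      hgap.add (hGθ.const_mul B)
    calc ∫ ω, ‖z ω‖ ^ 2 ∂μ
        ≤ ∫ ω, (2 * A * (f (θ ω) - fstar) + B * ‖G ω‖ ^ 2 + C) ∂μ :=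
          integral_le_of_condExp_le hm (hint.add (integrable_const C)) hsec
      _ = _ := by
        rw [integral_add hint (integrable_const C), integral_add hgap (hGθ.const_mul B),
          integral_const_mul, integral_const_mul, integral_sub hfθ (integrable_const fstar),
          integral_const, integral_const, probReal_univ, one_smul, one_smul]
  have hdescent : ∫ ω, f (θ' ω) ∂μ ≤ ∫ ω, f (θ ω) ∂μ - α * ∫ ω, ⟪G ω, z ω⟫ ∂μ
      + L / 2 * α ^ 2 * ∫ ω, ‖z ω‖ ^ 2 ∂μ := by
    have hlin : Integrable (fun ω => f (θ ω) - α * ⟪G ω, z ω⟫) μ :=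
      hfθ.sub (hGz.const_mul α)
    calc ∫ ω, f (θ' ω) ∂μ
        ≤ ∫ ω, (f (θ ω) - α * ⟪G ω, z ω⟫ + L / 2 * α ^ 2 * ‖z ω‖ ^ 2) ∂μ :=
          integral_mono hfθ' (hlin.add (hzsq.const_mul _)) fun ω => by
            simpa only [hθ'] using hf.apply_sub_smul_le hL (θ ω) (z ω) α
      _ = _ := by
        rw [integral_add hlin (hzsq.const_mul _),
          integral_sub hfθ (hGz.const_mul α), integral_const_mul, integral_const_mul]
  have hN : 0 ≤ ∫ ω, ‖G ω‖ ^ 2 ∂μ := integral_nonneg fun ω => by positivity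
  have hLα : 0 ≤ L / 2 * α ^ 2 := by positivity
  nlinarith [mul_le_mul_of_nonneg_left hfirst hα, mul_le_mul_of_nonneg_left hsecond hLα,
    mul_le_mul_of_nonneg_right hαLB (mul_nonneg hα hN)]

end Probability

theorem stmt_9_general {d : ℕ} {Ω : Type*} {mΩ : MeasurableSpace Ω} (μ : Measure Ω)
    [IsProbabilityMeasure μ]
    (f : EuclideanSpace ℝ (Fin d) → ℝ) (L fstar : ℝ)
    (hf : Differentiable ℝ f)
    (hL : ∀ x y, ‖gradient f x - gradient f y‖ ≤ L * ‖x - y‖)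
    (hbdd : ∀ x, fstar ≤ f x)
    (b c A B C α : ℝ) (hb : 0 < b) (hA : 0 ≤ A) (hB : 0 ≤ B)
    (hα : 0 < α) (hαB : α ≤ b / (L * B))
    (ℱ : ℕ → MeasurableSpace Ω) (hℱ : ∀ t, ℱ t ≤ mΩ)
    (θ z : ℕ → Ω → EuclideanSpace ℝ (Fin d))
    (θ0 : EuclideanSpace ℝ (Fin d)) (hθ0 : ∀ ω, θ 0 ω = θ0)
    (hadapted : ∀ t, StronglyMeasurable[ℱ t] (θ t))
    (hz : ∀ t, MemLp (z t) 2 μ)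
    (hfint : ∀ t, Integrable (fun ω => f (θ t ω)) μ)
    (hgint : ∀ t, Integrable (fun ω => ‖gradient f (θ t ω)‖ ^ 2) μ)
    (hupdate : ∀ t ω, θ (t + 1) ω = θ t ω - α • z t ω)
    (hcorr : ∀ t, ∀ᵐ ω ∂μ,
      ⟪gradient f (θ t ω), (μ[z t | ℱ t]) ω⟫ ≥
        b * ‖gradient f (θ t ω)‖ ^ 2 - c)
    (hsec : ∀ t, ∀ᵐ ω ∂μ,
      (μ[fun ω' => ‖z t ω'‖ ^ 2 | ℱ t]) ω ≤
        2 * A * (f (θ t ω) - fstar) + B * ‖gradient f (θ t ω)‖ ^ 2 + C) :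
    ∀ T : ℕ, (hT : 0 < T) →
      (Finset.range T).inf' (Finset.nonempty_range_iff.mpr hT.ne')
          (fun t => ∫ ω, ‖gradient f (θ t ω)‖ ^ 2 ∂μ) ≤
        (2 * (1 + A * L * α ^ 2) ^ T / (b * α * T)) * (f θ0 - fstar) +
          L * α * C / b + 2 * c / b := by
  intro T hT
  have hLB : 0 < L * B := (div_pos_iff_of_pos_left hb).mp (hα.trans_le hαB)
  have hL0 : 0 ≤ L := (pos_of_mul_pos_left hLB hB).le
  have hgrad : Continuous (gradient f) :=
    (LipschitzWith.of_dist_le' (K := L) (by simpa only [dist_eq_norm] using hL)).continuous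
  have hgap : ∀ t, 0 ≤ ∫ ω, f (θ t ω) ∂μ - fstar := fun t => by
    have := integral_mono (integrable_const fstar) (hfint t) fun ω => hbdd (θ t ω)
    simpa using this
  have hstep := fun t => integral_sub_le_of_sgd_step (hℱ t) hf hL hL0 hα.le
    ((le_div_iff₀ hLB).mp hαB) (hupdate t) (hgrad.comp_stronglyMeasurable (hadapted t)) (hz t)
    (hfint t) (hfint (t + 1)) (hgint t) (hcorr t) (hsec t)
  refine (inf'_range_le_of_forall_succ_le (δ := fun t => ∫ ω, f (θ t ω) ∂μ - fstar)
    (le_add_of_nonneg_right (by positivity)) (by positivity) hgap hstep _).trans_eq ?_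
  simp only [hθ0, integral_const, probReal_univ, one_smul]
  field_simp
  ring

/-- Biased SGD convergence bound for nonconvex smooth objectives under the
biased ABC condition (stated with conditional expectations w.r.t. a
filtration to which the iterates are adapted). -/
theorem stmt_9 {d : ℕ} {Ω : Type*} {mΩ : MeasurableSpace Ω} (μ : Measure Ω)
    [IsProbabilityMeasure μ]
    (f : EuclideanSpace ℝ (Fin d) → ℝ) (L fstar : ℝ)
    (hf : Differentiable ℝ f)
    (hL : ∀ x y, ‖gradient f x - gradient f y‖ ≤ L * ‖x - y‖)
    (hbdd : ∀ x, fstar ≤ f x)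
    (b c A B C α : ℝ) (hb : 0 < b) (hA : 0 ≤ A) (hB : 0 ≤ B) (hC : 0 ≤ C)
    (hc : 0 ≤ c) (hα : 0 < α) (hαB : α ≤ b / (L * B))
    (ℱ : ℕ → MeasurableSpace Ω) (hℱ : ∀ t, ℱ t ≤ mΩ)
    (θ z : ℕ → Ω → EuclideanSpace ℝ (Fin d))
    (θ0 : EuclideanSpace ℝ (Fin d)) (hθ0 : ∀ ω, θ 0 ω = θ0)
    (hadapted : ∀ t, StronglyMeasurable[ℱ t] (θ t))
    (hz : ∀ t, MemLp (z t) 2 μ)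
    (hfint : ∀ t, Integrable (fun ω => f (θ t ω)) μ)
    (hgint : ∀ t, Integrable (fun ω => ‖gradient f (θ t ω)‖ ^ 2) μ)
    (hupdate : ∀ t ω, θ (t + 1) ω = θ t ω - α • z t ω)
    (hcorr : ∀ t, ∀ᵐ ω ∂μ,
      ⟪gradient f (θ t ω), (μ[z t | ℱ t]) ω⟫ ≥
        b * ‖gradient f (θ t ω)‖ ^ 2 - c)
    (hsec : ∀ t, ∀ᵐ ω ∂μ,
      (μ[fun ω' => ‖z t ω'‖ ^ 2 | ℱ t]) ω ≤
        2 * A * (f (θ t ω) - fstar) + B * ‖gradient f (θ t ω)‖ ^ 2 + C) :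
    ∀ T : ℕ, (hT : 0 < T) →
      (Finset.range T).inf' (Finset.nonempty_range_iff.mpr hT.ne')
          (fun t => ∫ ω, ‖gradient f (θ t ω)‖ ^ 2 ∂μ) ≤
        (2 * (1 + A * L * α ^ 2) ^ T / (b * α * T)) * (f θ0 - fstar) +
          L * α * C / b + 2 * c / b :=
  stmt_9_general μ f L fstar hf hL hbdd b c A B C α hb hA hB hα hαB ℱ hℱ θ z θ0 hθ0 hadapted hz
    hfint hgint hupdate hcorr hsec
end

section
/- Let h(x, θ) be, for each θ, μ-strongly convex and twice continuously differentiable in x with minimizer x̂(θ), and let g be differentiable with L_g-Lipschitz gradient and ‖∇g‖ bounded. If x̃ satisfies ‖x̃ - x̂(θ)‖ ≤ ε and the approximate hypergradient is formed by replacing x̂(θ) with x̃ in z(θ) = ∂x̂(θ)^T ∇g(x̂(θ)), assuming ∂_x∇_θ h and ∇²_x h are Lipschitz in x and ‖∂_x∇_θ h‖ bounded, then the hypergradient error satisfies ‖e(θ)‖ ≤ Kε for a constant K depending only on μ, L_g, and the Lipschitz/boundedness constants. -/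
open RealInnerProductSpace

/-!
Write `ŵ`, `w̃` for the solutions of `Hs x̂ ŵ = ∇g(x̂)` and `Hs x̃ w̃ = ∇g(x̃)`. Strong convexity
gives `μ ‖v‖ ≤ ‖Hs x v‖`, so both solutions have norm at most `Cg / μ`, and subtracting the two
linear systems gives `Hs x̃ (w̃ - ŵ) = (∇g(x̃) - ∇g(x̂)) + (Hs x̂ - Hs x̃) ŵ`, whence
`‖w̃ - ŵ‖ ≤ (Lg + LH Cg / μ) ε / μ`. The error `B(x̃)ᵀ w̃ - B(x̂)ᵀ ŵ` splits as
`(B(x̃) - B(x̂))ᵀ w̃ + B(x̂)ᵀ (w̃ - ŵ)`, and adjoints preserve operator norms.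
-/

section Coercive

variable {E : Type*} [NormedAddCommGroup E] [InnerProductSpace ℝ E]

theorem ContinuousLinearMap.mul_norm_le_norm_apply_of_coercive {μ : ℝ} {T : E →L[ℝ] E}
    (hT : ∀ v, μ * ‖v‖ ^ 2 ≤ ⟪v, T v⟫) (v : E) : μ * ‖v‖ ≤ ‖T v‖ := by
  rcases eq_or_ne v 0 with rfl | hv
  · simp
  have hv : 0 < ‖v‖ := norm_pos_iff.mpr hv
  have hCS : ⟪v, T v⟫ ≤ ‖v‖ * ‖T v‖ := real_inner_le_norm _ _
  nlinarith [hT v]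

end Coercive

section Perturbation

variable {𝕜 E F : Type*} [NontriviallyNormedField 𝕜] [NormedAddCommGroup E] [NormedSpace 𝕜 E]
  [NormedAddCommGroup F] [NormedSpace 𝕜 F]

theorem ContinuousLinearMap.norm_apply_sub_apply_le (A B : E →L[𝕜] F) (u w : E) :
    ‖A u - B w‖ ≤ ‖A - B‖ * ‖u‖ + ‖B‖ * ‖u - w‖ := by
  have hsplit : A u - B w = (A - B) u + B (u - w) := by
    simp only [sub_apply, map_sub]
    abel
  rw [hsplit]
  exact (norm_add_le _ _).trans (add_le_add ((A - B).le_opNorm u) (B.le_opNorm _))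

theorem ContinuousLinearMap.norm_sub_le_of_bounded_below {μ : ℝ} (hμ : 0 < μ) {T S : E →L[𝕜] F}
    (hT : ∀ v, μ * ‖v‖ ≤ ‖T v‖) (u w : E) :
    ‖u - w‖ ≤ (‖T u - S w‖ + ‖T - S‖ * ‖w‖) / μ := by
  have hsplit : T (u - w) = (T u - S w) + (S - T) w := by
    simp only [sub_apply, map_sub]
    abel
  rw [le_div_iff₀' hμ]
  calc μ * ‖u - w‖ ≤ ‖T (u - w)‖ := hT _
    _ ≤ ‖T u - S w‖ + ‖S - T‖ * ‖w‖ := by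
      rw [hsplit]
      exact (norm_add_le _ _).trans (add_le_add_right ((S - T).le_opNorm w) _)
    _ = ‖T u - S w‖ + ‖T - S‖ * ‖w‖ := by rw [norm_sub_rev S T]

end Perturbation

/-- Bound on the inexact hypergradient error in bilevel optimization: the
hypergradient is `∂x̂(θ)ᵀ∇g(x̂(θ))` with `∂x̂(θ) = -∇²ₓh(x̂,θ)⁻¹ ∂θ∇ₓh(x̂,θ)`;
replacing the exact lower-level minimizer `x̂` by an `ε`-accurate point `x̃`
incurs an `O(ε)` error, with a constant `K` depending only on the strong
convexity parameter `μM`, the Lipschitz/boundedness constants `Lg, Cg` of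
`∇g`, `LB, CB` of the cross derivative `B`, and `LH` of the Hessian. The
Hessian solves `Hs x̂ ŵ = ∇g(x̂)` and `Hs x̃ w̃ = ∇g(x̃)` replace the explicit
inverse Hessian. -/
theorem stmt_19 {n dth : ℕ} (μM Lg Cg LB CB LH : ℝ)
    (hμ : 0 < μM) (hLg : 0 ≤ Lg) (hCg : 0 ≤ Cg) (hLB : 0 ≤ LB)
    (hCB : 0 ≤ CB) (hLH : 0 ≤ LH) :
    ∃ K : ℝ, 0 < K ∧
      ∀ (h g : EuclideanSpace ℝ (Fin n) → ℝ)
        (Bm : EuclideanSpace ℝ (Fin n) →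
          (EuclideanSpace ℝ (Fin dth) →L[ℝ] EuclideanSpace ℝ (Fin n)))
        (Hs : EuclideanSpace ℝ (Fin n) →
          (EuclideanSpace ℝ (Fin n) →L[ℝ] EuclideanSpace ℝ (Fin n)))
        (xhat xtil what wtil : EuclideanSpace ℝ (Fin n)) (ε : ℝ),
        0 ≤ ε →
        ContDiff ℝ 2 h →
        (∀ x, Hs x = fderiv ℝ (fun y => gradient h y) x) →
        (∀ x v, μM * ‖v‖ ^ 2 ≤ ⟪v, Hs x v⟫) →
        (∀ x y, ‖Hs x - Hs y‖ ≤ LH * ‖x - y‖) →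
        (∀ x y, ‖Bm x - Bm y‖ ≤ LB * ‖x - y‖) →
        (∀ x, ‖Bm x‖ ≤ CB) →
        Differentiable ℝ g →
        (∀ x y, ‖gradient g x - gradient g y‖ ≤ Lg * ‖x - y‖) →
        (∀ x, ‖gradient g x‖ ≤ Cg) →
        gradient h xhat = 0 →
        ‖xtil - xhat‖ ≤ ε →
        Hs xhat what = gradient g xhat →
        Hs xtil wtil = gradient g xtil →
        ‖(ContinuousLinearMap.adjoint (Bm xtil)) wtil -
            (ContinuousLinearMap.adjoint (Bm xhat)) what‖ ≤ K * ε := by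
  refine ⟨LB * (Cg / μM) + CB * ((Lg + LH * (Cg / μM)) / μM) + 1, by positivity, ?_⟩
  intro h g Bm Hs xhat xtil what wtil ε hε _ _ hcoer hHlip hBlip hBbd _ hglip hgbd _
    hclose hwhat hwtil
  have hbelow x := (Hs x).mul_norm_le_norm_apply_of_coercive (hcoer x)
  have hsol_le {x w} (hw : Hs x w = gradient g x) : ‖w‖ ≤ Cg / μM := by
    rw [le_div_iff₀' hμ]
    exact (hw ▸ hbelow x w).trans (hgbd x)
  have hw_sub : ‖wtil - what‖ ≤ (Lg * ε + LH * ε * (Cg / μM)) / μM := by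
    refine ((Hs xtil).norm_sub_le_of_bounded_below (S := Hs xhat) hμ (hbelow xtil) wtil what).trans ?_
    rw [hwtil, hwhat]
    gcongr
    · exact (hglip xtil xhat).trans (by gcongr)
    · exact (hHlip xtil xhat).trans (by gcongr)
    · exact hsol_le hwhat
  have hB_sub : ‖Bm xtil - Bm xhat‖ ≤ LB * ε := (hBlip xtil xhat).trans (by gcongr)
  calc _ ≤ ‖Bm xtil - Bm xhat‖ * ‖wtil‖ + ‖Bm xhat‖ * ‖wtil - what‖ := by
        simpa only [← map_sub, ContinuousLinearMap.adjoint.norm_map] using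
          ContinuousLinearMap.norm_apply_sub_apply_le (ContinuousLinearMap.adjoint (Bm xtil))
            (ContinuousLinearMap.adjoint (Bm xhat)) wtil what
    _ ≤ LB * ε * (Cg / μM) + CB * ((Lg * ε + LH * ε * (Cg / μM)) / μM) := by
        gcongr
        exacts [hsol_le hwtil, hBbd xhat]
    _ ≤ (LB * (Cg / μM) + CB * ((Lg + LH * (Cg / μM)) / μM) + 1) * ε := by
        have hKε : CB * ((Lg * ε + LH * ε * (Cg / μM)) / μM)
            = CB * ((Lg + LH * (Cg / μM)) / μM) * ε := by ring
        nlinarith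
end
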